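/- Let μ1, μ2 be nonzero real numbers and set μ3 = μ1, μ4 = μ2, and let θ2 ∈ (0, 2π) with θ2 ≠ π. Then (0, θ2, π, θ2 + π) is a critical point of V if and only if θ2 = π/2 or θ2 = 3π/2. (With two pairs of equal circulations at opposite points, the only rectangular configuration is the square.) -/

import Mathlib

open Real Polynomial

/-- The potential `V` for the (1+4)-vortex problem with circulation
parameters `μ` and angular positions `θ`. -/
noncomputable def V (μ θ : Fin 4 → ℝ) : ℝ :=
  -∑ i : Fin 4, ∑ j ∈ Finset.Ioi i,
      μ i * μ j *
        (Real.cos (θ i - θ j) + (1 / 2) * Real.log (2 - 2 * Real.cos (θ i - θ j)))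

/-- The partial derivative `∂V/∂θ_k` at the point `θ`. -/
noncomputable def partialV (μ θ : Fin 4 → ℝ) (k : Fin 4) : ℝ :=
  deriv (fun t => V μ (Function.update θ k t)) (θ k)

/-- `θ` is a critical point of `V`: all four partial derivatives vanish. -/
def IsCriticalPt (μ θ : Fin 4 → ℝ) : Prop :=
  ∀ k : Fin 4, partialV μ θ k = 0

/-- The Hessian matrix of `V` at `θ`, `H k l = ∂²V/∂θ_k ∂θ_l`. -/
noncomputable def hessV (μ θ : Fin 4 → ℝ) : Matrix (Fin 4) (Fin 4) ℝ :=
  fun k l => deriv (fun t => partialV μ (Function.update θ k t) l) (θ k)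

/-!
Write `f d = cos d + ½ log (2 - 2 cos d)` for the pair potential and
`g = f' = -sin d + sin d / (2 - 2 cos d)`. Away from collisions the pair `i < j` contributes
`-μ_i μ_j g(θ_i - θ_j)` to `∂V/∂θ_i` and, `g` being odd, `-μ_i μ_j g(θ_j - θ_i)` to `∂V/∂θ_j`.
At the rectangle each vortex sees its antipode, which exerts `g π = 0`, and the two others,
whose contributions add up by `g d + g (d + π) = cot d` to `± μ₁ μ₂ cot θ₂`. So the
configuration is critical exactly when `cos θ₂ = 0`.
-/

noncomputable def pairPotential (d : ℝ) : ℝ := cos d + (1 / 2) * log (2 - 2 * cos d)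

noncomputable def pairForce (d : ℝ) : ℝ := -sin d + sin d / (2 - 2 * cos d)

theorem hasDerivAt_pairPotential {d : ℝ} (h : cos d ≠ 1) :
    HasDerivAt pairPotential (pairForce d) d := by
  have h2 : (2 : ℝ) - 2 * cos d ≠ 0 := fun h' => h (by linarith)
  have hlog := (((hasDerivAt_cos d).const_mul 2).const_sub 2).log h2
  refine ((hasDerivAt_cos d).add (hlog.const_mul (1 / 2))).congr_deriv ?_
  rw [pairForce]
  ring

theorem pairForce_neg (d : ℝ) : pairForce (-d) = -pairForce d := by
  simp only [pairForce, sin_neg, cos_neg]; ring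

theorem pairForce_pi : pairForce π = 0 := by simp [pairForce]

theorem pairForce_sub_pi (d : ℝ) : pairForce (d - π) = pairForce (d + π) := by
  simp only [pairForce, sin_sub_pi, cos_sub_pi, sin_add_pi, cos_add_pi]

theorem pairForce_add_pairForce_add_pi {d : ℝ} (h : sin d ≠ 0) :
    pairForce d + pairForce (d + π) = cot d := by
  have hc : cos d ≠ 1 ∧ cos d ≠ -1 := by
    simpa [sin_eq_zero_iff_cos_eq, not_or] using h
  have h1 : 1 - cos d ≠ 0 := fun h' => hc.1 (by linarith)
  have h2 : 1 + cos d ≠ 0 := fun h' => hc.2 (by linarith)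
  simp only [pairForce, sin_add_pi, cos_add_pi, mul_neg, sub_neg_eq_add, cot_eq_cos_div_sin]
  field_simp
  linear_combination (2 * cos d) * sin_sq_add_cos_sq d

theorem hasDerivAt_pairPotential_update {ι : Type*} [DecidableEq ι] (θ : ι → ℝ) (k i j : ι)
    (h : cos (θ i - θ j) ≠ 1) :
    HasDerivAt (fun t => pairPotential (Function.update θ k t i - Function.update θ k t j))
      (pairForce (θ i - θ j) *
        (Pi.single (M := fun _ => ℝ) k 1 i - Pi.single (M := fun _ => ℝ) k 1 j)) (θ k) := by
  have hupd := hasDerivAt_pi.1 (hasDerivAt_update θ k (θ k))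
  exact (hasDerivAt_pairPotential h).comp_of_eq (θ k) ((hupd i).sub (hupd j))
    (by simp only [Function.update_eq_self])

theorem Fin.sum_sum_Ioi_four {M : Type*} [AddCommMonoid M] (f : Fin 4 → Fin 4 → M) :
    ∑ i, ∑ j ∈ Finset.Ioi i, f i j = f 0 1 + f 0 2 + f 0 3 + f 1 2 + f 1 3 + f 2 3 := by
  rw [Fin.sum_univ_four,
    show Finset.Ioi (0 : Fin 4) = {1, 2, 3} by decide, show Finset.Ioi (1 : Fin 4) = {2, 3} by decide,
    show Finset.Ioi (2 : Fin 4) = {3} by decide, show Finset.Ioi (3 : Fin 4) = ∅ by decide]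
  simp [add_assoc]

theorem partialV_eq (μ θ : Fin 4 → ℝ) (k : Fin 4) (hθ : ∀ i j, i ≠ j → cos (θ i - θ j) ≠ 1) :
    partialV μ θ k = -∑ i, ∑ j ∈ Finset.Ioi i, μ i * μ j * (pairForce (θ i - θ j) *
        (Pi.single (M := fun _ => ℝ) k 1 i - Pi.single (M := fun _ => ℝ) k 1 j)) := by
  have hV : HasDerivAt (fun t => -∑ i, ∑ j ∈ Finset.Ioi i,
      μ i * μ j * pairPotential (Function.update θ k t i - Function.update θ k t j)) _ (θ k) :=
    (HasDerivAt.fun_sum fun i _ => HasDerivAt.fun_sum fun j hj =>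
      (hasDerivAt_pairPotential_update θ k i j
        (hθ i j (Finset.mem_Ioi.1 hj).ne)).const_mul (μ i * μ j)).neg
  exact hV.deriv

theorem cos_sub_ne_one_rectangle {θ : ℝ} (hθ : sin θ ≠ 0) :
    ∀ i j, i ≠ j → cos ((![0, θ, π, θ + π] : Fin 4 → ℝ) i - ![0, θ, π, θ + π] j) ≠ 1 := by
  have hc : cos θ ≠ 1 ∧ cos θ ≠ -1 := by
    simpa [sin_eq_zero_iff_cos_eq, not_or] using hθ
  intro i j hij
  fin_cases i <;> fin_cases j <;>
    simp [-neg_add_rev, cos_add_pi, neg_eq_iff_eq_neg, hc.1, hc.2] at hij ⊢ <;> norm_num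

theorem partialV_rectangle (a b θ : ℝ) (hθ : sin θ ≠ 0) (k : Fin 4) :
    partialV ![a, b, a, b] ![0, θ, π, θ + π] k = (-1) ^ (k : ℕ) * (a * b * cot θ) := by
  rw [partialV_eq _ _ _ (cos_sub_ne_one_rectangle hθ), Fin.sum_sum_Ioi_four]
  have key := pairForce_add_pairForce_add_pi hθ
  -- keeping `-(θ + π)` intact lets `pairForce_neg` fire on every difference
  fin_cases k <;> simp [-neg_add_rev, pairForce_neg, pairForce_pi, pairForce_sub_pi] <;>
    first | linear_combination (a * b) * key | linear_combination (-(a * b)) * key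

theorem sin_ne_zero_of_mem_Ioo {θ : ℝ} (hθ : θ ∈ Set.Ioo 0 (2 * π)) (hθπ : θ ≠ π) :
    sin θ ≠ 0 := by
  rw [← neg_ne_zero, ← sin_sub_pi]
  exact mt (sin_eq_zero_iff_of_lt_of_lt (by linarith [hθ.1]) (by linarith [hθ.2])).1
    (sub_ne_zero.2 hθπ)

theorem cos_eq_zero_iff_of_mem_Ioo {θ : ℝ} (hθ : θ ∈ Set.Ioo 0 (2 * π)) :
    cos θ = 0 ↔ θ = π / 2 ∨ θ = 3 * π / 2 := by
  have hπ := pi_pos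
  constructor
  · intro h
    rcases le_total θ π with hle | hle
    · exact .inl <| injOn_cos ⟨hθ.1.le, hle⟩ ⟨by linarith, by linarith⟩
        (h.trans cos_pi_div_two.symm)
    · have : 2 * π - θ = π / 2 := injOn_cos ⟨by linarith [hθ.2], by linarith⟩
        ⟨by linarith, by linarith⟩ ((cos_two_pi_sub θ).trans (h.trans cos_pi_div_two.symm))
      exact .inr (by linarith)
  · rintro (rfl | rfl)
    · exact cos_pi_div_two
    · rw [show 3 * π / 2 = 2 * π - π / 2 by ring, cos_two_pi_sub, cos_pi_div_two]

/-- With two pairs of equal circulations, the only rectangular configuration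
is the square: `theta2 = pi/2` or `theta2 = 3pi/2`. -/
theorem rectangle_equal_pairs_is_square (μ1 μ2 θ2 : ℝ)
    (h1 : μ1 ≠ 0) (h2 : μ2 ≠ 0)
    (hθ : θ2 ∈ Set.Ioo (0 : ℝ) (2 * π)) (hθπ : θ2 ≠ π) :
    IsCriticalPt ![μ1, μ2, μ1, μ2] ![0, θ2, π, θ2 + π] ↔
      θ2 = π / 2 ∨ θ2 = 3 * π / 2 := by
  have hsin := sin_ne_zero_of_mem_Ioo hθ hθπ
  calc IsCriticalPt ![μ1, μ2, μ1, μ2] ![0, θ2, π, θ2 + π] ↔ μ1 * μ2 * cot θ2 = 0 := by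
        simp [IsCriticalPt, partialV_rectangle _ _ _ hsin]
    _ ↔ cos θ2 = 0 := by simp [h1, h2, cot_eq_cos_div_sin, hsin]
    _ ↔ θ2 = π / 2 ∨ θ2 = 3 * π / 2 := cos_eq_zero_iff_of_mem_Ioo hθ
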